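/- arXiv:1106.0950 — 4 statements merged into one kernel-verified Lean document; each statement's English description precedes it below -/
import Mathlib

section
/- Let $A$ be an associative algebra over a field of characteristic $0$ or $> n$ in which $x^n = 0$ for all $x$. Then for all $a, x, y \in A$: $n\, x^{n-1} a\, y^{n-1} = 0$, and hence $x^{n-1} a\, y^{n-1} = 0$. -/
/-!
Substituting `x + t • c` into `z ^ n = 0` gives a polynomial identity in `t` of degree `≤ n`;
since `0, 1, …, n` are distinct in `F`, each coefficient vanishes, in particular the linear one,
`∑_{p+q=n-1} x^p c x^q = 0`. Take `c = a y^i`, multiply on the right by `y^(n-1-i)` and sum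
over `i`: the terms with `x`-exponent `n-1` add up to `n • x^(n-1) a y^(n-1)`, and the others
regroup as `x^p a (∑_i y^i x^(n-1-p) y^(n-1-i))`, again linearizations, hence zero. Exponents `0`
occur on the way, so the computation takes place in the unitization of `A`, and finally `n` is
invertible in `F`.
-/

/-- `npow₁ x k = x^(k+1)`, powers in a possibly non-unital multiplicative structure. -/
def npow₁ {A : Type*} [Mul A] (x : A) : ℕ → A
  | 0 => x
  | k + 1 => npow₁ x k * x

open Finset Polynomial

theorem Nat.cast_injOn_Iic_of_ringChar {R : Type*} [NonAssocRing R] {n : ℕ}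
    (hchar : ringChar R = 0 ∨ n < ringChar R) : (Set.Iic n).InjOn (Nat.cast : ℕ → R) := by
  intro a ha b hb hab
  have hmod := (CharP.natCast_eq_natCast R (ringChar R)).1 hab
  rcases hchar with h | h
  · rwa [h, Nat.modEq_zero_iff] at hmod
  · exact hmod.eq_of_lt_of_lt (lt_of_le_of_lt ha h) (lt_of_le_of_lt hb h)

theorem Module.eq_zero_of_forall_index_sum_pow_smul_eq_zero {K V : Type*} [Field K]
    [AddCommGroup V] [Module K V] {n : ℕ} {f : Fin n → K} {v : Fin n → V}
    (hf : Function.Injective f) (hfv : ∀ j, ∑ i : Fin n, f j ^ (i : ℕ) • v i = 0) : v = 0 := by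
  funext i
  rw [Pi.zero_apply, ← Module.forall_dual_apply_eq_zero_iff K]
  intro φ
  have hφ := Matrix.eq_zero_of_forall_index_sum_pow_mul_eq_zero (v := fun i ↦ φ (v i)) hf
    fun j ↦ by simpa using congrArg φ (hfv j)
  exact congrFun hφ i

def powLinearization {B : Type*} [Semiring B] (n : ℕ) (x c : B) : B :=
  ∑ p ∈ range n, x ^ p * c * x ^ (n - 1 - p)

section Linearization

variable {B : Type*} [Semiring B]

theorem Polynomial.coeff_zero_pow_C_add_C_mul_X (x c : B) (n : ℕ) :
    ((C x + C c * X) ^ n).coeff 0 = x ^ n := by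
  induction n with
  | zero => simp
  | succ n ih => rw [pow_succ, mul_coeff_zero, ih, pow_succ]; simp

theorem Polynomial.coeff_one_pow_C_add_C_mul_X (x c : B) (n : ℕ) :
    ((C x + C c * X) ^ n).coeff 1 = powLinearization n x c := by
  induction n with
  | zero => simp [powLinearization, coeff_one]
  | succ n ih =>
    rw [pow_succ, mul_add, coeff_add, coeff_mul_C, ← mul_assoc, coeff_mul_X, coeff_mul_C, ih,
      coeff_zero_pow_C_add_C_mul_X, powLinearization, powLinearization, sum_range_succ, sum_mul]
    congr 1
    · refine sum_congr rfl fun p hp ↦ ?_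
      rw [mul_assoc, ← pow_succ]
      congr 2
      have := mem_range.1 hp
      omega
    · simp

theorem Polynomial.natDegree_pow_C_add_C_mul_X_le (x c : B) (n : ℕ) :
    ((C x + C c * X) ^ n).natDegree ≤ n := by
  compute_degree

theorem add_smul_pow_eq_sum_coeff {F : Type*} [CommSemiring F] [Algebra F B] (x c : B) (n : ℕ)
    (t : F) : (x + t • c) ^ n = ∑ i ∈ range (n + 1), t ^ i • ((C x + C c * X) ^ n).coeff i := by
  let ev := eval₂RingHom' (RingHom.id B) (algebraMap F B t)
    fun b ↦ Algebra.commute_algebraMap_right t b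
  have h : ev (C x + C c * X) = x + t • c := by simp [ev, Algebra.smul_def, Algebra.commutes]
  rw [← h, ← map_pow, eval₂RingHom'_apply,
    eval₂_eq_sum_range' _ (Nat.lt_succ_of_le (natDegree_pow_C_add_C_mul_X_le x c n))]
  refine sum_congr rfl fun i _ ↦ ?_
  rw [RingHom.id_apply, ← map_pow, Algebra.smul_def, Algebra.commutes]

end Linearization

theorem powLinearization_eq_zero_of_add_smul_pow_eq_zero {F B : Type*} [Field F] [Ring B]
    [Algebra F B] {n : ℕ} {f : Fin (n + 1) → F} (hf : Function.Injective f) {x c : B}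
    (h : ∀ j, (x + f j • c) ^ n = 0) : powLinearization n x c = 0 := by
  rcases n with _ | n
  · simp [powLinearization]
  have hcoeff := Module.eq_zero_of_forall_index_sum_pow_smul_eq_zero
    (v := fun i : Fin (n + 2) ↦ ((C x + C c * X) ^ (n + 1)).coeff i) hf fun j ↦ by
      refine (Fin.sum_univ_eq_sum_range (fun i ↦ f j ^ i • ((C x + C c * X) ^ (n + 1)).coeff i)
        _).trans ?_
      rw [← add_smul_pow_eq_sum_coeff, h j]
  rw [← coeff_one_pow_C_add_C_mul_X]
  exact congrFun hcoeff 1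

section NagataHigman

variable {B : Type*} [Semiring B]

theorem sum_powLinearization_mul_pow (n : ℕ) (x a y : B) :
    ∑ i ∈ range (n + 1), powLinearization (n + 1) x (a * y ^ i) * y ^ (n - i) =
      (n + 1) • (x ^ n * a * y ^ n) +
        ∑ p ∈ range n, x ^ p * a * powLinearization (n + 1) y (x ^ (n - p)) := by
  simp only [powLinearization, Nat.add_sub_cancel, sum_mul, mul_sum]
  rw [sum_comm, sum_range_succ, add_comm]
  congr 1
  · have hterm : ∀ i ∈ range (n + 1),
        x ^ n * (a * y ^ i) * x ^ (n - n) * y ^ (n - i) = x ^ n * a * y ^ n := fun i hi ↦ by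
      rw [Nat.sub_self, pow_zero, mul_one, mul_assoc (x ^ n), mul_assoc a, ← pow_add,
        Nat.add_sub_cancel' (Nat.lt_succ_iff.1 (mem_range.1 hi)), mul_assoc]
    rw [sum_congr rfl hterm, sum_const, card_range]
  · exact sum_congr rfl fun p _ ↦ sum_congr rfl fun i _ ↦ by simp only [mul_assoc]

theorem NonUnitalSubsemiring.mul_pow_mem (S : NonUnitalSubsemiring B) {a y : B} (ha : a ∈ S)
    (hy : y ∈ S) (k : ℕ) : a * y ^ k ∈ S := by
  induction k with
  | zero => simpa using ha
  | succ k ih => simpa [pow_succ, ← mul_assoc] using mul_mem ih hy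

theorem nsmul_pow_mul_mul_pow_eq_zero (S : NonUnitalSubsemiring B) {n : ℕ}
    (hL : ∀ u ∈ S, ∀ c ∈ S, powLinearization (n + 1) u c = 0) {x a y : B} (hx : x ∈ S)
    (ha : a ∈ S) (hy : y ∈ S) : (n + 1) • (x ^ n * a * y ^ n) = 0 := by
  have h := sum_powLinearization_mul_pow n x a y
  rw [sum_eq_zero fun i _ ↦ ?_, sum_eq_zero fun p hp ↦ ?_, add_zero] at h
  · exact h.symm
  · obtain ⟨k, hk⟩ : ∃ k, n - p = k + 1 := ⟨n - p - 1, by have := mem_range.1 hp; omega⟩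
    rw [hk, pow_succ', hL y hy _ (S.mul_pow_mem hx hx k), mul_zero]
  · rw [hL x hx _ (S.mul_pow_mem ha hy i), zero_mul]

end NagataHigman

theorem map_npow₁ {A B G : Type*} [Mul A] [Monoid B] [FunLike G A B] [MulHomClass G A B]
    (φ : G) (x : A) (k : ℕ) : φ (npow₁ x k) = φ x ^ (k + 1) := by
  induction k with
  | zero => simp [npow₁]
  | succ k ih => rw [npow₁, map_mul, ih, ← pow_succ]

theorem nsmul_npow₁_mul_mul_npow₁_eq_zero {F A : Type*} [Field F] [NonUnitalRing A] [Module F A]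
    [IsScalarTower F A A] [SMulCommClass F A A] {m : ℕ} {f : Fin (m + 3) → F}
    (hf : Function.Injective f) (hnil : ∀ z : A, npow₁ z (m + 1) = 0) (a x y : A) :
    (m + 2) • (npow₁ x m * a * npow₁ y m) = 0 := by
  let φ := Unitization.inrNonUnitalAlgHom F A
  let S := NonUnitalAlgHom.range φ
  have hS : ∀ z ∈ S, z ^ (m + 2) = 0 := by
    rintro _ ⟨w, rfl⟩
    rw [← map_npow₁, hnil, map_zero]
  have hL : ∀ u ∈ S, ∀ c ∈ S, powLinearization (m + 2) u c = 0 := fun u hu c hc ↦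
    powLinearization_eq_zero_of_add_smul_pow_eq_zero hf fun _ ↦ hS _ (add_mem hu (S.smul_mem _ hc))
  have h := nsmul_pow_mul_mul_pow_eq_zero S.toNonUnitalSubsemiring hL
    (NonUnitalAlgHom.mem_range_self _ x) (NonUnitalAlgHom.mem_range_self _ a)
    (NonUnitalAlgHom.mem_range_self _ y)
  rw [← map_npow₁, ← map_npow₁, ← map_mul, ← map_mul, ← map_nsmul, ← map_zero φ] at h
  exact Unitization.inr_injective h

/-- In a (not necessarily unital) associative algebra over a field of characteristic
`0` or `> n` satisfying `x^n = 0` for all `x`, we have `n • (x^(n-1) a y^(n-1)) = 0`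
and hence `x^(n-1) a y^(n-1) = 0`. -/
theorem stmt_13 (F : Type*) [Field F] (n : ℕ) (hn : 2 ≤ n)
    (hchar : ringChar F = 0 ∨ n < ringChar F)
    (A : Type*) [NonUnitalRing A] [Module F A] [IsScalarTower F A A] [SMulCommClass F A A]
    (hnil : ∀ x : A, npow₁ x (n - 1) = 0) (a x y : A) :
    n • (npow₁ x (n - 2) * a * npow₁ y (n - 2)) = 0 ∧
    npow₁ x (n - 2) * a * npow₁ y (n - 2) = 0 := by
  obtain ⟨m, rfl⟩ : ∃ m, n = m + 2 := ⟨n - 2, by omega⟩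
  have hcast := Nat.cast_injOn_Iic_of_ringChar (R := F) hchar
  have hf : Function.Injective fun i : Fin (m + 3) ↦ ((i : ℕ) : F) := fun i j hij ↦
    Fin.ext (hcast (Set.mem_Iic.2 (by omega)) (Set.mem_Iic.2 (by omega)) hij)
  have hn0 : ((m + 2 : ℕ) : F) ≠ 0 := fun h0 ↦ by
    simpa using hcast (Set.mem_Iic.2 le_rfl) (Set.mem_Iic.2 (Nat.zero_le _))
      (h0.trans Nat.cast_zero.symm)
  have h := nsmul_npow₁_mul_mul_npow₁_eq_zero hf hnil a x y
  refine ⟨h, ?_⟩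
  rw [← Nat.cast_smul_eq_nsmul F] at h
  exact (smul_eq_zero.1 h).resolve_left hn0
end

section
/- Let $A$ be an associative algebra over a field of characteristic $\neq 2, 3$ in which $x^4 = 0$ for all $x$. Then for all $a, b \in A$: $a^3 b a^3 = 0$. -/
/-!
Polarizing `x⁴ = 0`: the sum `P(x, y)` (`quarticPolar x y`) of the four words with three letters `x` and one
letter `y` is the coefficient of `t` in `(x + t y)⁴`. Comparing `(x + y)⁴` with `(x - y)⁴`
gives `2 (P(x, y) + P(y, x)) = 0`, and replacing `x` by `2x` then gives `6 P(x, y) = 0`, so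
`P = 0` when `2` and `3` are invertible. Finally `a³ P(a, b) = a³ b a³`, because every other
term of the product contains `a⁴`.
-/

theorem eq_zero_of_nsmul_eq_zero_of_cast_ne_zero {F A : Type*} [DivisionRing F] [AddCommGroup A]
    [Module F A] {n : ℕ} (hn : (n : F) ≠ 0) {z : A} (h : n • z = 0) : z = 0 := by
  rw [← Nat.cast_smul_eq_nsmul F] at h
  exact (smul_eq_zero.mp h).resolve_left hn

section NonUnitalRing

variable {A : Type*} [NonUnitalRing A]

def quarticPolar (x y : A) : A :=
  x * x * x * y + x * x * y * x + x * y * x * x + y * x * x * x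

theorem quarticPolar_nsmul_right (n : ℕ) (x y : A) :
    quarticPolar x (n • y) = n • quarticPolar x y := by
  simp only [quarticPolar, smul_mul_assoc, mul_smul_comm, smul_add]

theorem quarticPolar_nsmul_left (n : ℕ) (x y : A) :
    quarticPolar (n • x) y = n ^ 3 • quarticPolar x y := by
  simp only [quarticPolar, smul_mul_assoc, mul_smul_comm, smul_smul, smul_add]
  ring_nf

theorem add_fourth_sub_sub_fourth (x y : A) :
    (x + y) * (x + y) * (x + y) * (x + y) - (x - y) * (x - y) * (x - y) * (x - y) =
      2 • (quarticPolar x y + quarticPolar y x) := by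
  simp only [quarticPolar, mul_add, add_mul, mul_sub, sub_mul, two_nsmul]
  abel

theorem cube_mul_quarticPolar {a : A} (ha : a * a * a * a = 0) (b : A) :
    a * a * a * quarticPolar a b = a * a * a * b * a * a * a := by
  simp only [quarticPolar, mul_add, ← mul_assoc, ha, zero_mul, zero_add]

variable {F : Type*} [DivisionRing F] [Module F A] (h4 : ∀ x : A, x * x * x * x = 0)
include h4

theorem quarticPolar_add_quarticPolar_eq_zero (h2 : (2 : F) ≠ 0) (x y : A) :
    quarticPolar x y + quarticPolar y x = 0 := by
  refine eq_zero_of_nsmul_eq_zero_of_cast_ne_zero (n := 2) (by exact_mod_cast h2) ?_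
  rw [← add_fourth_sub_sub_fourth, h4, h4, sub_zero]

theorem quarticPolar_eq_zero (h2 : (2 : F) ≠ 0) (h3 : (3 : F) ≠ 0) (x y : A) :
    quarticPolar x y = 0 := by
  have hyx : quarticPolar y x = -quarticPolar x y :=
    eq_neg_of_add_eq_zero_right (quarticPolar_add_quarticPolar_eq_zero h4 h2 x y)
  have h := quarticPolar_add_quarticPolar_eq_zero h4 h2 y (2 • x)
  rw [quarticPolar_nsmul_right, quarticPolar_nsmul_left, hyx] at h
  have h6 : (6 : ℕ) • quarticPolar x y = 0 := by
    rw [← h]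
    module
  have h6F : ((6 : ℕ) : F) ≠ 0 := by
    rw [show ((6 : ℕ) : F) = 2 * 3 by norm_num]
    exact mul_ne_zero h2 h3
  exact eq_zero_of_nsmul_eq_zero_of_cast_ne_zero h6F h6

end NonUnitalRing

theorem stmt_16_general (F : Type*) [Field F] (h2 : (2 : F) ≠ 0) (h3 : (3 : F) ≠ 0)
    (A : Type*) [NonUnitalRing A] [Module F A]
    (h4 : ∀ x : A, x * x * x * x = 0) (a b : A) :
    a * a * a * b * a * a * a = 0 := by
  rw [← cube_mul_quarticPolar (h4 a), quarticPolar_eq_zero h4 h2 h3, mul_zero]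

/-- In a (not necessarily unital) associative algebra over a field of characteristic
`≠ 2, 3` in which `x⁴ = 0` for all `x`, we have `a³ b a³ = 0` for all `a, b`. -/
theorem stmt_16 (F : Type*) [Field F] (h2 : (2 : F) ≠ 0) (h3 : (3 : F) ≠ 0)
    (A : Type*) [NonUnitalRing A] [Module F A] [IsScalarTower F A A] [SMulCommClass F A A]
    (h4 : ∀ x : A, x * x * x * x = 0) (a b : A) :
    a * a * a * b * a * a * a = 0 :=
  stmt_16_general F h2 h3 A h4 a b
end

section
/- In the relatively free algebra $N_{4,d}$ with identity $x^4=0$ over an infinite field of characteristic $\neq 2$, for a letter $x$ and words $a,b$ not beginning or ending with $x$: $x^3 a x b x^2 = -x^3 a x^2 b x$ and $x a x^3 b x^2 = x^3 a x^2 b x$. -/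
/-!
Over an infinite field every multihomogeneous component of `z⁴ = 0` is again an identity; in
particular `T₃₁(x, y) = y x³ + x y x² + x² y x + x³ y` vanishes. Multiplying `T₃₁` on suitable
sides kills every term containing `x⁴`: `T₃₁(x, y) x³` gives `x³ y x³ = 0`, `T₃₁(x, y) x²` gives
`x³ y x² = -x² y x³`, and `x³ a T₃₁(x, b)`, `T₃₁(x, a) b x³` give the first identity and its
mirror image. The second identity is then a four-step chain through these.
-/

open Polynomial

theorem Module.eq_zero_of_forall_sum_pow_smul_eq_zero {F M : Type*} [Field F] [Infinite F]
    [AddCommGroup M] [Module F M] {n : ℕ} (v : Fin n → M)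
    (h : ∀ t : F, ∑ i : Fin n, t ^ (i : ℕ) • v i = 0) (i : Fin n) : v i = 0 := by
  rw [← Module.forall_dual_apply_eq_zero_iff F]
  intro φ
  have hp : ∑ j : Fin n, C (φ (v j)) * X ^ (j : ℕ) = 0 := Polynomial.funext fun t => by
    simp only [eval_finsetSum, eval_mul, eval_C, eval_pow, eval_X, eval_zero]
    simpa [mul_comm] using congrArg φ (h t)
  simpa [finsetSum_coeff, coeff_C_mul_X_pow, Fin.val_inj] using congrArg (coeff · i) hp

section Polarization

variable {A : Type*} [NonUnitalRing A]

/-- `T₃₁(x, y)`: the component of `(x + y)⁴` of degree `3` in `x` and `1` in `y`. -/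
def quarticPolarization (x y : A) : A :=
  y * x * x * x + x * y * x * x + x * x * y * x + x * x * x * y

theorem quarticPolarization_eq_zero (F : Type*) [Field F] [Infinite F] [Module F A]
    [IsScalarTower F A A] [SMulCommClass F A A] (h4 : ∀ z : A, z * z * z * z = 0) (x y : A) :
    quarticPolarization x y = 0 := by
  refine Module.eq_zero_of_forall_sum_pow_smul_eq_zero (F := F)
    ![x * x * x * x, quarticPolarization x y,
      y * y * x * x + y * x * y * x + y * x * x * y + x * y * y * x + x * y * x * y + x * x * y * y,
      x * y * y * y + y * x * y * y + y * y * x * y + y * y * y * x, y * y * y * y] (fun t => ?_) 1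
  rw [← h4 (x + t • y)]
  simp only [Fin.sum_univ_five, quarticPolarization, Matrix.cons_val, Fin.coe_ofNat_eq_mod,
    mul_add, add_mul, smul_mul_assoc, mul_smul_comm, smul_smul, smul_add]
  module

variable {x : A} (hx : x * x * x * x = 0) (hT : ∀ y, quarticPolarization x y = 0)
include hx hT

theorem x3yx3_eq_zero (y : A) : x * x * x * y * x * x * x = 0 := by
  calc x * x * x * y * x * x * x
      = quarticPolarization x y * (x * x * x)
        - (y * (x * x * x * x) * x * x + x * y * (x * x * x * x) * x + x * x * y * (x * x * x * x))
        := by unfold quarticPolarization; noncomm_ring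
    _ = 0 := by rw [hT, hx]; simp

theorem x3yx2_eq_neg_x2yx3 (y : A) : x * x * x * y * x * x = -(x * x * y * x * x * x) := by
  refine eq_neg_of_add_eq_zero_left ?_
  calc x * x * x * y * x * x + x * x * y * x * x * x
      = quarticPolarization x y * (x * x) - (y * (x * x * x * x) * x + x * y * (x * x * x * x))
        := by unfold quarticPolarization; noncomm_ring
    _ = 0 := by rw [hT, hx]; simp

theorem x3axbx2_add_x3ax2bx_eq_zero (a b : A) :
    x * x * x * a * x * b * x * x + x * x * x * a * x * x * b * x = 0 := by
  calc x * x * x * a * x * b * x * x + x * x * x * a * x * x * b * x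
      = x * x * x * a * quarticPolarization x b
        - (x * x * x * (a * b) * x * x * x + x * x * x * a * x * x * x * b)
        := by unfold quarticPolarization; noncomm_ring
    _ = 0 := by rw [hT, x3yx3_eq_zero hx hT, x3yx3_eq_zero hx hT]; simp

theorem xax2bx3_add_x2axbx3_eq_zero (a b : A) :
    x * a * x * x * b * x * x * x + x * x * a * x * b * x * x * x = 0 := by
  calc x * a * x * x * b * x * x * x + x * x * a * x * b * x * x * x
      = quarticPolarization x a * b * (x * x * x)
        - (a * (x * x * x * b * x * x * x) + x * x * x * (a * b) * x * x * x)
        := by unfold quarticPolarization; noncomm_ring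
    _ = 0 := by rw [hT, x3yx3_eq_zero hx hT, x3yx3_eq_zero hx hT]; simp

theorem xax3bx2_eq_x3ax2bx (a b : A) :
    x * a * x * x * x * b * x * x = x * x * x * a * x * x * b * x := by
  calc x * a * x * x * x * b * x * x
      = x * a * (x * x * x * b * x * x) := by noncomm_ring
    _ = -(x * a * x * x * b * x * x * x) := by rw [x3yx2_eq_neg_x2yx3 hx hT]; noncomm_ring
    _ = x * x * a * x * b * x * x * x :=
        (eq_neg_of_add_eq_zero_right (xax2bx3_add_x2axbx3_eq_zero hx hT a b)).symm
    _ = -(x * x * x * (a * x * b) * x * x) := by rw [x3yx2_eq_neg_x2yx3 hx hT]; noncomm_ring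
    _ = x * x * x * a * x * x * b * x := by
        rw [← neg_eq_of_add_eq_zero_right (x3axbx2_add_x3ax2bx_eq_zero hx hT a b)]; noncomm_ring

end Polarization

theorem stmt_17_general (F : Type*) [Field F] [Infinite F]
    (A : Type*) [NonUnitalRing A] [Module F A] [IsScalarTower F A A] [SMulCommClass F A A]
    (h4 : ∀ z : A, z * z * z * z = 0) (x a b : A) :
    x * x * x * a * x * b * x * x = -(x * x * x * a * x * x * b * x) ∧
    x * a * x * x * x * b * x * x = x * x * x * a * x * x * b * x := by
  have hT := quarticPolarization_eq_zero F h4 x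
  exact ⟨eq_neg_of_add_eq_zero_left (x3axbx2_add_x3ax2bx_eq_zero (h4 x) hT a b),
    xax3bx2_eq_x3ax2bx (h4 x) hT a b⟩

/-- In any (not necessarily unital) associative algebra over an infinite field of
characteristic `≠ 2` satisfying the identity `z⁴ = 0` — in particular in the relatively
free algebra `N_{4,d}` — for all elements `x, a, b`:
`x³ a x b x² = -x³ a x² b x` and `x a x³ b x² = x³ a x² b x`. -/
theorem stmt_17 (F : Type*) [Field F] [Infinite F] (h2 : (2 : F) ≠ 0)
    (A : Type*) [NonUnitalRing A] [Module F A] [IsScalarTower F A A] [SMulCommClass F A A]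
    (h4 : ∀ z : A, z * z * z * z = 0) (x a b : A) :
    x * x * x * a * x * b * x * x = -(x * x * x * a * x * x * b * x) ∧
    x * a * x * x * x * b * x * x = x * x * x * a * x * x * b * x :=
  stmt_17_general F A h4 x a b
end

section
/- Over an infinite field of characteristic $2$, the nilpotency degree of the relatively free $d$-generated algebra with identity $x^4 = 0$ satisfies $C_{4,d} > 3d$; more precisely, the word $x_1^3 x_2^3 \cdots x_d^3$ is nonzero in $N_{4,d}$. -/
/-- The augmentation (constant-term) homomorphism of the free algebra. -/
noncomputable def aug (F : Type*) [CommRing F] (X : Type*) :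
    FreeAlgebra F X →ₐ[F] F :=
  FreeAlgebra.lift F (fun _ : X => (0 : F))

/-- The relation whose ring quotient of the free algebra on `d` generators is the
(unitization of the) relatively free algebra `N_{4,d}` with identity `x⁴ = 0`:
fourth powers of all elements with zero constant term are set to zero. -/
def relN4 (F : Type*) [CommRing F] (d : ℕ) :
    FreeAlgebra F (Fin d) → FreeAlgebra F (Fin d) → Prop :=
  fun a b => b = 0 ∧ ∃ f : FreeAlgebra F (Fin d), aug F (Fin d) f = 0 ∧ a = f ^ 4

/-!
`N_{4,d}` maps onto the commutative truncated polynomial algebra `F[x₁, …, x_d] ⧸ (x₁⁴, …, x_d⁴)`: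
in characteristic `2` the map `f ↦ f⁴` is the square of the Frobenius, hence additive on a
commutative algebra, so the fourth power of a polynomial without constant term lies in the ideal
spanned by the `xᵢ⁴`. The image of `x₁³ ⋯ x_d³` is a monomial not divisible by any `xᵢ⁴`, so it
is nonzero.
-/

theorem Ideal.pow_expChar_pow_mem_span_image {R : Type*} [CommSemiring R] (p n : ℕ)
    [ExpChar R p] {s : Set R} {x : R} (hx : x ∈ Ideal.span s) :
    x ^ p ^ n ∈ Ideal.span ((· ^ p ^ n) '' s) := by
  have hx' := Ideal.mem_map_of_mem (iterateFrobenius R p n) hx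
  rw [Ideal.map_span] at hx'
  exact hx'

namespace MvPolynomial

variable {σ R : Type*} [CommRing R]

theorem mem_idealOfVars_of_constantCoeff_eq_zero {f : MvPolynomial σ R}
    (hf : constantCoeff f = 0) : f ∈ idealOfVars σ R := by
  rw [idealOfVars, ← Set.image_univ, mem_ideal_span_X_image]
  intro m hm
  have hm0 : m ≠ 0 := by
    rintro rfl
    exact mem_support_iff.mp hm (by rwa [← constantCoeff_eq])
  obtain ⟨i, hi⟩ := Finsupp.ne_iff.mp hm0
  exact ⟨i, trivial, hi⟩

theorem pow_expChar_pow_mem_span_X_pow (p n : ℕ) [ExpChar R p] {f : MvPolynomial σ R}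
    (hf : constantCoeff f = 0) :
    f ^ p ^ n ∈ Ideal.span (Set.range fun i => X i ^ p ^ n) := by
  simpa only [← Set.range_comp, Function.comp_def] using
    Ideal.pow_expChar_pow_mem_span_image p n (mem_idealOfVars_of_constantCoeff_eq_zero hf)

theorem prod_X_pow_notMem_span_X_pow [Fintype σ] [Nontrivial R] {m k : ℕ} (hmk : m < k) :
    ∏ i, (X i : MvPolynomial σ R) ^ m ∉ Ideal.span (Set.range fun i => X i ^ k) := by
  classical
  have hspan : Set.range (fun i => (X i : MvPolynomial σ R) ^ k) =
      (monomial · 1) '' Set.range fun i => Finsupp.single i k := by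
    rw [← Set.range_comp]
    simp [Function.comp_def, X_pow_eq_monomial]
  rw [hspan, mem_ideal_span_monomial_image]
  simp_rw [X_pow_eq_monomial, ← monomial_sum_one]
  simp [hmk]

theorem constantCoeff_freeAlgebraLift_X (f : FreeAlgebra R σ) :
    constantCoeff (FreeAlgebra.lift R X f) = aug R σ f := by
  induction f using FreeAlgebra.induction with
  | grade0 r => simp
  | grade1 i => simp [aug]
  | add a b ha hb => simp [ha, hb]
  | mul a b ha hb => simp [ha, hb]

end MvPolynomial

theorem stmt_18_general (F : Type*) [Field F] (h2 : ringChar F = 2)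
    (d : ℕ) :
    RingQuot.mkAlgHom F (relN4 F d)
      ((List.ofFn fun i : Fin d => FreeAlgebra.ι F i ^ 3).prod) ≠ 0 := by
  have : CharP F 2 := h2 ▸ ringChar.charP F
  let I : Ideal (MvPolynomial (Fin d) F) :=
    Ideal.span (Set.range fun i => MvPolynomial.X i ^ 2 ^ 2)
  let φ := (Ideal.Quotient.mkₐ F I).comp (FreeAlgebra.lift F MvPolynomial.X)
  have hφ : ∀ ⦃a b⦄, relN4 F d a b → φ a = φ b := by
    rintro _ _ ⟨rfl, f, hf, rfl⟩
    rw [map_pow, map_zero]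
    exact Ideal.Quotient.eq_zero_iff_mem.mpr <| MvPolynomial.pow_expChar_pow_mem_span_X_pow 2 2
      ((MvPolynomial.constantCoeff_freeAlgebraLift_X f).trans hf)
  intro h
  have hword := congrArg (RingQuot.liftAlgHom F ⟨φ, hφ⟩) h
  rw [RingQuot.liftAlgHom_mkAlgHom_apply, map_zero, AlgHom.comp_apply, Ideal.Quotient.mkₐ_eq_mk,
    Ideal.Quotient.eq_zero_iff_mem, map_list_prod, List.map_ofFn, List.prod_ofFn] at hword
  simp only [Function.comp_def, map_pow, FreeAlgebra.lift_ι_apply] at hword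
  exact MvPolynomial.prod_X_pow_notMem_span_X_pow (by norm_num) hword

/-- Over an infinite field of characteristic `2`, the word `x₁³ x₂³ ⋯ x_d³` is nonzero
in `N_{4,d}`; in particular the nilpotency degree satisfies `C_{4,d} > 3d`. -/
theorem stmt_18 (F : Type*) [Field F] [Infinite F] (h2 : ringChar F = 2)
    (d : ℕ) (hd : 1 ≤ d) :
    RingQuot.mkAlgHom F (relN4 F d)
      ((List.ofFn fun i : Fin d => FreeAlgebra.ι F i ^ 3).prod) ≠ 0 :=
  stmt_18_general F h2 d
end
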